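/- Let A and B be C*-algebras, ⊗_* a fixed C*-tensor product of A and B, and let K_1 : X × X → A and K_2 : S × S → B be positive definite kernels on nonempty sets X and S. Then the kernel K : (X × S) × (X × S) → A ⊗_* B defined by K((x,s),(y,t)) = K_1(x,y) ⊗ K_2(s,t) is positive definite, i.e. ∑_{i,j=1}^n ξ_i* K((x_i,s_i),(x_j,s_j)) ξ_j ≥ 0 for all n, all (x_i,s_i) ∈ X × S, and all ξ_1, …, ξ_n ∈ A ⊗_* B. -/

import Mathlib

/-!
Since finite sums of elementary tensors are dense in `C` and the quadratic form of the kernel is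
continuous in the coefficients, it suffices to take each coefficient `ξᵢ = ∑ₖ αᵢₖ ⊗ βᵢₖ`. Then the
form equals `∑ᵤᵥ Pᵤᵥ ⊗ Qᵤᵥ`, where `P` and `Q` are positive semidefinite matrices over `A` and `B`
(Gram matrices of `K₁` and `K₂` conjugated by the `αᵢₖ` and `βᵢₖ`). For `ε > 0`, a Cholesky
factorisation `P + ε = RᴴR`, obtained by Schur complements whose pivot `P₀₀ + ε` is invertible,
and likewise `Q + ε = R'ᴴR'`, write `∑ᵤᵥ (P + ε)ᵤᵥ ⊗ (Q + ε)ᵤᵥ` as `∑_{w,z} y_{wz}* y_{wz}` with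
`y_{wz} = ∑ᵤ R_{wu} ⊗ R'_{zu}`. Letting `ε → 0` finishes the proof: `tmul` need not be
continuous, but the expression is a polynomial in `ε`.
-/

open scoped RightActions

/-- The Dec-2024 Mathlib notion of a Hilbert C*-module (right `A`-action via `Aᵐᵒᵖ`),
restated here because Mathlib's `CStarModule` has since changed meaning (left action). -/
class OldCStarModule (A : outParam Type*) (E : Type*) [NonUnitalSemiring A] [StarRing A]
    [Module ℂ A] [AddCommGroup E] [Module ℂ E] [PartialOrder A] [SMul Aᵐᵒᵖ E] [Norm A] [Norm E]
    extends Inner A E where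
  inner_add_right {x} {y} {z} : inner x (y + z) = inner x y + inner x z
  inner_self_nonneg {x} : 0 ≤ inner x x
  inner_self {x} : inner x x = 0 ↔ x = 0
  inner_op_smul_right {a : A} {x y : E} : inner x (y <• a) = inner x y * a
  inner_smul_right_complex {z : ℂ} {x} {y} : inner x (z • y) = z • inner x y
  star_inner x y : star (inner x y) = inner y x
  norm_eq_sqrt_norm_inner_self x : ‖x‖ = Real.sqrt ‖inner x x‖

/-- A *reproducing kernel Hilbert C*-module* (RKHC*M) over the C*-algebra `A` on the set `S`:
a Hilbert C*-module `E` over `A` realized (injectively) as a right `A`-submodule of the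
`A`-valued functions on `S` via `toFun`, together with kernel elements `k s` such that
evaluation at `s` is given by `f ↦ ⟪k s, f⟫`, and such that the `A`-linear span of the
`k s` is dense in `E`. -/
structure RKHCM (A : Type*) (S : Type*) (E : Type*)
    [CStarAlgebra A] [PartialOrder A] [StarOrderedRing A]
    [NormedAddCommGroup E] [NormedSpace ℂ E] [SMul Aᵐᵒᵖ E] [OldCStarModule A E] where
  toFun : E → S → A
  injective : Function.Injective toFun
  k : S → E
  eval_eq : ∀ (f : E) (s : S), toFun f s = inner A (k s) f
  dense_span : Dense
    ((Submodule.span ℂ (Set.range fun p : S × A => k p.1 <• p.2) : Submodule ℂ E) : Set E)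

/-- A positive definite `A`-valued kernel on `S`. -/
def IsPosDefKernel {A : Type*} [CStarAlgebra A] [PartialOrder A] [StarOrderedRing A]
    {S : Type*} (K : S → S → A) : Prop :=
  ∀ (n : ℕ) (s : Fin n → S) (a : Fin n → A),
    0 ≤ ∑ i, ∑ j, star (a i) * K (s i) (s j) * a j

/-- An abstract C*-tensor product of the C*-algebras `A` and `B`: a C*-algebra `C`
together with a bilinear map `tmul : A → B → C` (elementary tensors `a ⊗ b`) which is
multiplicative and star-preserving in both variables jointly, and whose elementary
tensors have dense linear span in `C`. -/
structure CStarTensor (A B C : Type*)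
    [CStarAlgebra A] [CStarAlgebra B] [CStarAlgebra C] where
  tmul : A →ₗ[ℂ] B →ₗ[ℂ] C
  tmul_mul : ∀ (a a' : A) (b b' : B), tmul (a * a') (b * b') = tmul a b * tmul a' b'
  tmul_star : ∀ (a : A) (b : B), star (tmul a b) = tmul (star a) (star b)
  dense_span : Dense
    ((Submodule.span ℂ (Set.range fun p : A × B => tmul p.1 p.2) : Submodule ℂ C) : Set C)

open Matrix

lemma star_eq_of_isSelfAdjoint_add_of_isSelfAdjoint_I_smul_sub {E : Type*} [AddCommGroup E]
    [Module ℂ E] [StarAddMonoid E] [StarModule ℂ E] {p q : E} (hadd : IsSelfAdjoint (p + q))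
    (hsub : IsSelfAdjoint (Complex.I • (p - q))) : star p = q := by
  have h₁ := hadd.star_eq
  have h₂ := hsub.star_eq
  simp only [star_add, star_smul, star_sub, Complex.star_def, Complex.conj_I] at h₁ h₂
  linear_combination (norm := skip) (1 / 2 : ℂ) • h₁ + (Complex.I / 2) • h₂
  match_scalars <;> ring_nf <;> simp [Complex.I_sq]

section Kernel

variable {A : Type*} [CStarAlgebra A] [PartialOrder A] [StarOrderedRing A] {S : Type*}
  {K : S → S → A}

lemma IsPosDefKernel.star_apply (hK : IsPosDefKernel K) (x y : S) : star (K x y) = K y x := by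
  have hpair (c d : A) := IsSelfAdjoint.of_nonneg (hK 2 ![x, y] ![c, d])
  have hdiag (z : S) : IsSelfAdjoint (K z z) := by
    simpa using IsSelfAdjoint.of_nonneg (hK 1 ![z] ![1])
  refine star_eq_of_isSelfAdjoint_add_of_isSelfAdjoint_I_smul_sub ?_ ?_
  · convert ((hpair 1 1).sub (hdiag x)).sub (hdiag y) using 1
    simp only [Fin.sum_univ_two, Fin.isValue, cons_val_zero, cons_val_one, cons_val_fin_one,
      mul_one, star_one, one_mul]
    abel
  · convert ((hpair 1 (Complex.I • 1)).sub (hdiag x)).sub (hdiag y) using 1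
    simp only [Fin.sum_univ_two, Fin.isValue, cons_val_zero, cons_val_one, cons_val_fin_one,
      mul_one, star_one, one_mul, Algebra.mul_smul_comm, Algebra.smul_mul_assoc, star_smul,
      RCLike.star_def, Complex.conj_I, neg_smul, neg_mul, smul_neg, smul_smul, Complex.I_mul_I,
      one_smul, neg_neg]
    module

lemma IsPosDefKernel.posSemidef (hK : IsPosDefKernel K) {ι : Type*} [Fintype ι] (s : ι → S) :
    (Matrix.of fun i j => K (s i) (s j)).PosSemidef := by
  refine (posSemidef_submatrix_equiv (Fintype.equivFin ι).symm).mp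
    (.of_dotProduct_mulVec_nonneg ?_ fun a => ?_)
  · ext i j
    simp [hK.star_apply]
  · simpa [dotProduct, mulVec, Finset.mul_sum, mul_assoc] using hK _ _ a

lemma IsPosDefKernel.posSemidef_conj (hK : IsPosDefKernel K) {ι : Type*} [Fintype ι]
    (s : ι → S) (a : ι → A) :
    (Matrix.of fun i j => star (a i) * K (s i) (s j) * a j).PosSemidef := by
  classical
  convert (hK.posSemidef s).conjTranspose_mul_mul_same (diagonal a) using 1
  ext i j
  simp [diagonal_mul, mul_diagonal]

end Kernel

lemma Matrix.IsHermitian.exists_add_smul_one_eq_conjTranspose_mul_self_option {R : Type*}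
    [Ring R] [StarRing R] [Module ℝ R] {ι : Type*} [Fintype ι] [DecidableEq ι]
    {G : Matrix (Option ι) (Option ι) R} (hG : G.IsHermitian) {ε : ℝ} {u : R} {r : ι → R}
    {t : Matrix ι ι R} (hu : G none none + ε • 1 = star u * u)
    (hr : ∀ v, star u * r v = G none (some v))
    (ht : G.submatrix some some - vecMulVec (star r) r + ε • 1 = tᴴ * t) :
    ∃ M : Matrix (Option ι) (Option ι) R, G + ε • 1 = Mᴴ * M := by
  refine ⟨Matrix.of fun z y => z.elim (y.elim u r) fun w => y.elim 0 (t w), ?_⟩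
  ext (_ | w) (_ | v)
  · simpa [mul_apply, Fintype.sum_option] using hu
  · simpa [mul_apply, Fintype.sum_option] using (hr v).symm
  · simp only [add_apply, smul_apply, ne_eq, reduceCtorEq, not_false_eq_true, one_apply_ne,
      smul_zero, add_zero, mul_apply, conjTranspose_apply, of_apply, Option.elim_some,
      Option.elim_none, Fintype.sum_option, mul_zero, Finset.sum_const_zero]
    rw [← hG.apply (some w) none, ← hr w, star_mul, star_star]
  · have := congrFun₂ ht w v
    simp only [add_apply, sub_apply, submatrix_apply, smul_apply, one_apply, smul_ite, smul_zero,
      mul_apply, conjTranspose_apply, vecMulVec_apply, Pi.star_apply, Option.some.injEq, of_apply,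
      Option.elim_some, Option.elim_none, Fintype.sum_option] at this ⊢
    rw [← this]
    abel

section Cholesky

variable {A : Type*} [CStarAlgebra A] [PartialOrder A] [StarOrderedRing A] {ι : Type*}
  [Fintype ι]

lemma Matrix.PosSemidef.submatrix_some_sub_vecMulVec {G : Matrix (Option ι) (Option ι) A}
    (hG : G.PosSemidef) {u : Aˣ} {r : ι → A} (hle : G none none ≤ star (u : A) * u)
    (hr : ∀ v, star (u : A) * r v = G none (some v)) :
    (G.submatrix some some - vecMulVec (star r) r).PosSemidef := by
  refine .of_dotProduct_mulVec_nonneg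
    ((hG.isHermitian.submatrix some).sub (posSemidef_vecMulVec_star_self r).isHermitian)
    fun x => ?_
  -- `G` is tested on `(c, x)`, with `c` completing the square in the pivot coordinate
  set Y := r ⬝ᵥ x
  set c := -(↑u⁻¹ * Y)
  set F := star x ⬝ᵥ (G.submatrix some some *ᵥ x)
  have hZ : (fun v => G none (some v)) ⬝ᵥ x = star (u : A) * Y := by
    simp only [Y, dotProduct, Finset.mul_sum, ← hr, mul_assoc]
  have hH : star x ⬝ᵥ ((G.submatrix some some - vecMulVec (star r) r) *ᵥ x) =
      F - star Y * Y := by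
    rw [sub_mulVec, dotProduct_sub, vecMulVec_mulVec, dotProduct_smul,
      star_dotProduct (v := x) (w := star r), star_star, op_smul_eq_mul]
  have hform : star (Option.elim' c x) ⬝ᵥ (G *ᵥ Option.elim' c x) =
      star c * G none none * c + star c * (star (u : A) * Y) + star (star (u : A) * Y) * c + F := by
    rw [← hZ]
    simp only [F, dotProduct, mulVec, Fintype.sum_option, Option.elim', Pi.star_apply,
      submatrix_apply, star_sum, star_mul, hG.isHermitian.apply, mul_add, Finset.sum_add_distrib,
      Finset.mul_sum, Finset.sum_mul, mul_assoc]
    abel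
  have hc : star c * G none none * c ≤ star Y * Y :=
    calc star c * G none none * c ≤ star c * (star (u : A) * u) * c :=
          star_left_conjugate_le_conjugate hle c
      _ = star (↑u * (↑u⁻¹ * Y)) * (↑u * (↑u⁻¹ * Y)) := by
          simp only [c, star_neg, star_mul, neg_mul, mul_neg, neg_neg, mul_assoc]
      _ = star Y * Y := by rw [Units.mul_inv_cancel_left]
  have hcZ : star c * (star (u : A) * Y) = -(star Y * Y) := by
    simp only [c, star_neg, star_mul, neg_mul, mul_assoc]
    rw [← mul_assoc (star (↑u⁻¹ : A)), ← star_mul, Units.mul_inv, star_one, one_mul]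
  have hZc : star (star (u : A) * Y) * c = -(star Y * Y) := by
    simp only [c, star_mul, star_star, mul_neg, mul_assoc, Units.mul_inv_cancel_left]
  rw [hH]
  calc (0 : A) ≤ star (Option.elim' c x) ⬝ᵥ (G *ᵥ Option.elim' c x) :=
        hG.dotProduct_mulVec_nonneg _
    _ ≤ star Y * Y + -(star Y * Y) + -(star Y * Y) + F := by
        rw [hform, hcZ, hZc]; gcongr
    _ = F - star Y * Y := by abel

theorem Matrix.PosSemidef.exists_add_smul_one_eq_conjTranspose_mul_self [DecidableEq ι]
    {G : Matrix ι ι A} (hG : G.PosSemidef) {ε : ℝ} (hε : 0 < ε) :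
    ∃ R : Matrix ι ι A, G + ε • 1 = Rᴴ * R := by
  refine Fintype.induction_empty_option (P := fun α _ => ∀ [DecidableEq α] (G : Matrix α α A),
    G.PosSemidef → ∃ R : Matrix α α A, G + ε • 1 = Rᴴ * R) ?_ ?_ ?_ ι G hG
  · intro α β _ e ih _ G hG
    classical
    let _ : Fintype α := Fintype.ofEquiv β e.symm
    obtain ⟨R, hR⟩ := ih (G.submatrix e e) (hG.submatrix e)
    refine ⟨R.submatrix e.symm e.symm, ?_⟩
    rw [conjTranspose_submatrix, submatrix_mul_equiv, ← hR]
    simp [submatrix_add, submatrix_smul, submatrix_one_equiv]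
  · exact fun _ _ => ⟨0, Subsingleton.elim _ _⟩
  · intro α _ ih _ G hG
    classical
    obtain rfl : ‹DecidableEq (Option α)› = Option.instDecidableEq := Subsingleton.elim _ _
    have hε1 : IsStrictlyPositive (ε • 1 : A) := .smul hε isStrictlyPositive_one
    have hpivot : IsStrictlyPositive (G none none + ε • 1) := hε1.nonneg_add hG.diag_nonneg
    obtain ⟨u, hu, hgu⟩ := CStarAlgebra.isStrictlyPositive_iff_eq_star_mul_self.mp hpivot
    lift u to Aˣ using hu
    set r : α → A := fun v => star (↑u⁻¹ : A) * G none (some v)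
    have hr (v : α) : star (u : A) * r v = G none (some v) := by
      simp only [r, ← mul_assoc, ← star_mul, Units.inv_mul, star_one, one_mul]
    obtain ⟨t, ht⟩ := ih _ (hG.submatrix_some_sub_vecMulVec
      (hgu ▸ le_add_of_nonneg_right hε1.nonneg) hr)
    exact hG.isHermitian.exists_add_smul_one_eq_conjTranspose_mul_self_option hgu hr ht

end Cholesky

lemma sum_star_mul_mul_nonneg_of_dense {R : Type*} [Ring R] [StarRing R] [TopologicalSpace R]
    [IsTopologicalRing R] [ContinuousStar R] [PartialOrder R] [ClosedIciTopology R]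
    {ι : Type*} [Fintype ι] (M : ι → ι → R) {D : Set R} (hD : Dense D)
    (h : ∀ c : ι → R, (∀ i, c i ∈ D) → 0 ≤ ∑ i, ∑ j, star (c i) * M i j * c j) (c : ι → R) :
    0 ≤ ∑ i, ∑ j, star (c i) * M i j * c j := by
  refine (dense_pi Set.univ fun _ _ => hD).induction (fun c hc => h c fun i => hc i trivial)
    (isClosed_Ici.preimage ?_) c
  fun_prop

namespace CStarTensor

variable {A B C : Type*} [CStarAlgebra A] [CStarAlgebra B] [CStarAlgebra C]
  (T : CStarTensor A B C)

lemma exists_eq_sum_tmul_of_mem_span {c : C}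
    (hc : c ∈ Submodule.span ℂ (Set.range fun p : A × B => T.tmul p.1 p.2)) :
    ∃ (m : ℕ) (a : Fin m → A) (b : Fin m → B), c = ∑ k, T.tmul (a k) (b k) := by
  obtain ⟨m, z, g, rfl⟩ := Submodule.mem_span_set'.mp hc
  choose p hp using fun k => (g k).2
  refine ⟨m, fun k => z k • (p k).1, fun k => (p k).2, Finset.sum_congr rfl fun k _ => ?_⟩
  rw [← hp k, map_smul, LinearMap.smul_apply]

lemma sum_star_mul_tmul_mul_eq_sum_sigma {ι : Type*} [Fintype ι] {κ : ι → Type*}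
    [∀ i, Fintype (κ i)] (a : ι → ι → A) (b : ι → ι → B) (α : ∀ i, κ i → A)
    (β : ∀ i, κ i → B) :
    ∑ i, ∑ j, star (∑ k, T.tmul (α i k) (β i k)) * T.tmul (a i j) (b i j) *
        ∑ l, T.tmul (α j l) (β j l) =
      ∑ σ : Σ i, κ i, ∑ τ : Σ i, κ i,
        T.tmul (star (α σ.1 σ.2) * a σ.1 τ.1 * α τ.1 τ.2)
          (star (β σ.1 σ.2) * b σ.1 τ.1 * β τ.1 τ.2) := by
  simp only [star_sum, Finset.sum_mul, Finset.mul_sum, T.tmul_star, ← T.tmul_mul,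
    Fintype.sum_sigma]
  exact Finset.sum_congr rfl fun i _ =>
    (Finset.sum_congr rfl fun j _ => Finset.sum_comm).trans Finset.sum_comm

lemma sum_tmul_conjTranspose_mul_self_nonneg [PartialOrder C] [StarOrderedRing C]
    {ι κ κ' : Type*} [Fintype ι] [Fintype κ] [Fintype κ'] (R : Matrix κ ι A)
    (R' : Matrix κ' ι B) : 0 ≤ ∑ u, ∑ v, T.tmul ((Rᴴ * R) u v) ((R'ᴴ * R') u v) := by
  have entry (u v : ι) : T.tmul ((Rᴴ * R) u v) ((R'ᴴ * R') u v) =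
      ∑ p : κ × κ', star (T.tmul (R p.1 u) (R' p.2 u)) * T.tmul (R p.1 v) (R' p.2 v) := by
    simp only [mul_apply, conjTranspose_apply, map_sum, LinearMap.sum_apply, T.tmul_star,
      T.tmul_mul, Fintype.sum_prod_type]
    exact Finset.sum_comm
  calc (0 : C)
      ≤ ∑ p : κ × κ', star (∑ u, T.tmul (R p.1 u) (R' p.2 u)) * ∑ v, T.tmul (R p.1 v) (R' p.2 v) :=
        Finset.sum_nonneg fun p _ => star_mul_self_nonneg _
    _ = ∑ p : κ × κ', ∑ u, ∑ v,
          star (T.tmul (R p.1 u) (R' p.2 u)) * T.tmul (R p.1 v) (R' p.2 v) := by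
        simp only [star_sum, Finset.sum_mul_sum]
    _ = ∑ u, ∑ v, T.tmul ((Rᴴ * R) u v) ((R'ᴴ * R') u v) := by
        simp only [entry]
        rw [Finset.sum_comm]
        exact Finset.sum_congr rfl fun u _ => Finset.sum_comm

lemma continuous_tmul_add_smul (a a' : A) (b b' : B) :
    Continuous fun ε : ℝ => T.tmul (a + ε • a') (b + ε • b') := by
  simp only [map_add, LinearMap.map_smul_of_tower, LinearMap.add_apply, LinearMap.smul_apply]
  fun_prop

lemma sum_tmul_nonneg_of_posSemidef [PartialOrder A] [StarOrderedRing A] [PartialOrder B]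
    [StarOrderedRing B] [PartialOrder C] [StarOrderedRing C] {ι : Type*} [Fintype ι]
    {P : Matrix ι ι A} {Q : Matrix ι ι B} (hP : P.PosSemidef) (hQ : Q.PosSemidef) :
    0 ≤ ∑ u, ∑ v, T.tmul (P u v) (Q u v) := by
  classical
  set f : ℝ → C := fun ε => ∑ u, ∑ v, T.tmul ((P + ε • 1) u v) ((Q + ε • 1) u v)
  have hf : Continuous f := by
    simp only [f, Matrix.add_apply, Matrix.smul_apply]
    exact continuous_finsetSum _ fun u _ => continuous_finsetSum _ fun v _ =>
      T.continuous_tmul_add_smul _ _ _ _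
  have hpos (ε : ℝ) (hε : 0 < ε) : 0 ≤ f ε := by
    obtain ⟨R, hR⟩ := hP.exists_add_smul_one_eq_conjTranspose_mul_self hε
    obtain ⟨R', hR'⟩ := hQ.exists_add_smul_one_eq_conjTranspose_mul_self hε
    simpa only [f, hR, hR'] using T.sum_tmul_conjTranspose_mul_self_nonneg R R'
  simpa [f] using ge_of_tendsto (hf.tendsto 0 |>.mono_left nhdsWithin_le_nhds)
    (eventually_nhdsWithin_of_forall (s := Set.Ioi 0) hpos)

end CStarTensor

theorem tensor_product_of_posDef_kernels_isPosDef_general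
    {A B C : Type*} [CStarAlgebra A] [PartialOrder A] [StarOrderedRing A]
    [CStarAlgebra B] [PartialOrder B] [StarOrderedRing B]
    [CStarAlgebra C] [PartialOrder C] [StarOrderedRing C]
    (T : CStarTensor A B C)
    {X S : Type*}
    (K₁ : X → X → A) (K₂ : S → S → B)
    (h₁ : IsPosDefKernel K₁) (h₂ : IsPosDefKernel K₂) :
    IsPosDefKernel (fun p q : X × S => T.tmul (K₁ p.1 q.1) (K₂ p.2 q.2)) := by
  intro n x c
  refine sum_star_mul_mul_nonneg_of_dense _ T.dense_span (fun c hc => ?_) c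
  choose m α β hc using fun i => T.exists_eq_sum_tmul_of_mem_span (hc i)
  rw [funext hc, T.sum_star_mul_tmul_mul_eq_sum_sigma]
  exact T.sum_tmul_nonneg_of_posSemidef (h₁.posSemidef_conj _ _) (h₂.posSemidef_conj _ _)

/-- if `K₁ : X × X → A` and `K₂ : S × S → B` are positive definite
kernels, then the kernel `K((x,s),(y,t)) = K₁(x,y) ⊗ K₂(s,t)` with values in the
C*-tensor product `A ⊗ B` is positive definite. -/
theorem tensor_product_of_posDef_kernels_isPosDef
    {A B C : Type*} [CStarAlgebra A] [PartialOrder A] [StarOrderedRing A]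
    [CStarAlgebra B] [PartialOrder B] [StarOrderedRing B]
    [CStarAlgebra C] [PartialOrder C] [StarOrderedRing C]
    (T : CStarTensor A B C)
    {X S : Type*} [Nonempty X] [Nonempty S]
    (K₁ : X → X → A) (K₂ : S → S → B)
    (h₁ : IsPosDefKernel K₁) (h₂ : IsPosDefKernel K₂) :
    IsPosDefKernel (fun p q : X × S => T.tmul (K₁ p.1 q.1) (K₂ p.2 q.2)) :=
  tensor_product_of_posDef_kernels_isPosDef_general T K₁ K₂ h₁ h₂
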